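/- Let S ⊆ V be an independent set of H = (V,E), let 𝓗 be a real inner product space, let x be a feasible SDP solution for H in 𝓗, and let ê ∈ 𝓗 be a unit vector with ⟨ê, x_I⟩ = 0 for every nonempty I ⊆ V∖S with |I| ≤ r+1. Define, for each nonempty I ⊆ V with |I| ≤ r+1: x'_I := ê if I ⊆ S; x'_I := x_I if I ⊆ V∖S; and x'_I := 0 otherwise. Then x' is a feasible SDP solution for H in 𝓗. -/

import Mathlib

/-!
Collapsing every subset of `S` to the single unit vector `ê` keeps the constraints local: a
set meeting both `S` and its complement is sent to `0`, and `ê` is orthogonal to everything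
that survives outside `S`. Hence each inner product of the new family is either `1` (both sets
inside `S`), `0` (a mixed union), or an inner product of the old solution (everything inside
`Sᶜ`). The only constraint that needs more is the triangle constraint on a mixed set
`{u, v₁, …, v_r}`: its left side is `1`, and one of the pairs `{u, vᵢ}` is itself mixed, so
the right side already contains a term `1 - 0`.
-/

open Finset
open scoped RealInnerProductSpace Classical
/-- Feasibility of a solution for the crude SDP for an `r`-uniform hypergraph `(V, E)`. -/
def SDPFeasible {V : Type} [DecidableEq V]
    {H : Type} [NormedAddCommGroup H] [InnerProductSpace ℝ H]
    (r : ℕ) (E : Finset (Finset V)) (x : Finset V → H) : Prop :=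
  (∀ i : V, ‖x {i}‖ ^ 2 = (1 : ℝ)) ∧
  (∀ e ∈ E, ‖x e‖ ^ 2 = (0 : ℝ)) ∧
  (∀ I J : Finset V, I.Nonempty → J.Nonempty → (I ∪ J).card ≤ r + 1 →
    ⟪x I, x J⟫ = ‖x (I ∪ J)‖ ^ 2) ∧
  (∀ (u : V) (I J : Finset V), I.Nonempty → I ⊆ J → J.card ≤ r + 1 →
    ⟪x {u}, x J⟫ ≤ ⟪x {u}, x I⟫) ∧
  (∀ (u : V) (v : Fin r → V), Function.Injective v → (∀ i, v i ≠ u) →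
    1 - ‖x (insert u (Finset.image v Finset.univ))‖ ^ 2 ≤
      ∑ i : Fin r, (1 - ‖x {u, v i}‖ ^ 2))

/-!
Collapsing every subset of `S` to the single unit vector `ê` keeps the constraints local: a
set meeting both `S` and its complement is sent to `0`, and `ê` is orthogonal to everything
that survives outside `S`. Hence each inner product of the new family is either `1` (both sets
inside `S`), `0` (a mixed union), or an inner product of the old solution (everything inside
`Sᶜ`). The only constraint that needs more is the triangle constraint on a mixed set
`{u, v₁, …, v_r}`: its left side is `1`, and one of the pairs `{u, vᵢ}` is itself mixed, so
the right side already contains a term `1 - 0`.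
-/

namespace SDPFeasible

variable {V : Type} [DecidableEq V] {H : Type} [NormedAddCommGroup H] [InnerProductSpace ℝ H]
  {r : ℕ} {E : Finset (Finset V)} {x : Finset V → H}

theorem norm_sq_le_one (hx : SDPFeasible r E x) {u : V} {K : Finset V} (hu : u ∈ K)
    (hK : K.card ≤ r + 1) : ‖x K‖ ^ 2 ≤ 1 := by
  obtain ⟨h1, -, h3, h4, -⟩ := hx
  have hunion : {u} ∪ K = K := by simpa using hu
  calc ‖x K‖ ^ 2 = ⟪x {u}, x K⟫ := by
        rw [h3 _ _ (singleton_nonempty u) ⟨u, hu⟩ (by rwa [hunion]), hunion]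
    _ ≤ ⟪x {u}, x {u}⟫ := h4 u {u} K (singleton_nonempty u) (singleton_subset_iff.2 hu) hK
    _ = 1 := by rw [real_inner_self_eq_norm_sq, h1]

theorem inner_singleton_nonneg (hx : SDPFeasible r E x) (u : V) {I : Finset V}
    (hI : I.Nonempty) (hcard : I.card ≤ r) : 0 ≤ ⟪x {u}, x I⟫ := by
  have : ({u} ∪ I).card ≤ r + 1 := by
    have := card_union_le {u} I
    rw [card_singleton] at this
    omega
  rw [hx.2.2.1 {u} I (singleton_nonempty u) hI this]
  positivity

end SDPFeasible

theorem Finset.exists_mem_pair_not_subset_of_insert {V : Type} [Fintype V] [DecidableEq V]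
    {S s : Finset V} {u : V} (hS : ¬ insert u s ⊆ S) (hSc : ¬ insert u s ⊆ Sᶜ) :
    ∃ a ∈ s, ¬ {u, a} ⊆ S ∧ ¬ {u, a} ⊆ Sᶜ := by
  simp only [not_subset, mem_insert, mem_compl, exists_eq_or_imp, not_not] at hS hSc
  by_cases hu : u ∈ S
  · obtain hu' | ⟨a, ha, haS⟩ := hS
    · exact absurd hu hu'
    exact ⟨a, ha, by simp [insert_subset_iff, haS], by simp [insert_subset_iff, hu]⟩
  · obtain hu' | ⟨a, ha, haS⟩ := hSc
    · exact absurd hu' hu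
    exact ⟨a, ha, by simp [insert_subset_iff, hu], by simp [insert_subset_iff, haS]⟩

theorem Finset.Nonempty.not_subset_of_subset_compl {V : Type} [Fintype V] [DecidableEq V]
    {S I : Finset V} (hI : I.Nonempty) (h : I ⊆ Sᶜ) : ¬ I ⊆ S := fun hS => by
  obtain ⟨a, ha⟩ := hI
  exact mem_compl.1 (h ha) (hS ha)

section Collapse

variable {V : Type} [Fintype V] [DecidableEq V] {H : Type}

def collapse [Zero H] (S : Finset V) (e : H) (x : Finset V → H) (I : Finset V) : H :=
  if I ⊆ S then e else if I ⊆ Sᶜ then x I else 0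

variable {S : Finset V} {e : H} {x : Finset V → H} {I J K : Finset V}

section Zero

variable [Zero H]

theorem collapse_of_subset (h : I ⊆ S) : collapse S e x I = e := if_pos h

theorem collapse_of_subset_compl (hI : I.Nonempty) (h : I ⊆ Sᶜ) : collapse S e x I = x I := by
  rw [collapse, if_neg (hI.not_subset_of_subset_compl h), if_pos h]

theorem collapse_of_not_subset (hS : ¬ I ⊆ S) (hSc : ¬ I ⊆ Sᶜ) : collapse S e x I = 0 := by
  rw [collapse, if_neg hS, if_neg hSc]

theorem collapse_singleton (i : V) : collapse S e x {i} = if i ∈ S then e else x {i} := by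
  by_cases hi : i ∈ S
  · rw [if_pos hi, collapse_of_subset (singleton_subset_iff.2 hi)]
  · rw [if_neg hi, collapse_of_subset_compl (singleton_nonempty i)
      (singleton_subset_iff.2 (mem_compl.2 hi))]

theorem collapse_union_of_subset_of_not_subset (hI : I.Nonempty) (hIS : I ⊆ S)
    (hJS : ¬ J ⊆ S) : collapse S e x (I ∪ J) = 0 :=
  collapse_of_not_subset (fun h => hJS (subset_union_right.trans h))
    (fun h => hI.not_subset_of_subset_compl (subset_union_left.trans h) hIS)

end Zero

variable [NormedAddCommGroup H] [InnerProductSpace ℝ H] {r : ℕ} {E : Finset (Finset V)}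

theorem inner_collapse_eq_zero_of_not_subset
    (horth : ∀ I : Finset V, I.Nonempty → I ⊆ Sᶜ → I.card ≤ r + 1 → ⟪e, x I⟫ = 0)
    (hK : K.Nonempty) (hcard : K.card ≤ r + 1) (hKS : ¬ K ⊆ S) :
    ⟪e, collapse S e x K⟫ = 0 := by
  by_cases hKc : K ⊆ Sᶜ
  · rw [collapse_of_subset_compl hK hKc, horth K hK hKc hcard]
  · rw [collapse_of_not_subset hKS hKc, inner_zero_right]

theorem inner_collapse_right (he : ‖e‖ = 1)
    (horth : ∀ I : Finset V, I.Nonempty → I ⊆ Sᶜ → I.card ≤ r + 1 → ⟪e, x I⟫ = 0)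
    (hK : K.Nonempty) (hcard : K.card ≤ r + 1) :
    ⟪e, collapse S e x K⟫ = if K ⊆ S then 1 else 0 := by
  by_cases hKS : K ⊆ S
  · rw [if_pos hKS, collapse_of_subset hKS, real_inner_self_eq_norm_sq, he, one_pow]
  · rw [if_neg hKS, inner_collapse_eq_zero_of_not_subset horth hK hcard hKS]

theorem inner_singleton_collapse_of_notMem
    (horth : ∀ I : Finset V, I.Nonempty → I ⊆ Sᶜ → I.card ≤ r + 1 → ⟪e, x I⟫ = 0)
    {u : V} (hu : u ∉ S) (hK : K.Nonempty) :
    ⟪x {u}, collapse S e x K⟫ = if K ⊆ Sᶜ then ⟪x {u}, x K⟫ else 0 := by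
  by_cases hKS : K ⊆ S
  · have hKc : ¬ K ⊆ Sᶜ := fun hKc => hK.not_subset_of_subset_compl hKc hKS
    rw [if_neg hKc, collapse_of_subset hKS, real_inner_comm,
      horth {u} (singleton_nonempty u) (singleton_subset_iff.2 (mem_compl.2 hu)) (by simp)]
  · by_cases hKc : K ⊆ Sᶜ
    · rw [if_pos hKc, collapse, if_neg hKS, if_pos hKc]
    · rw [if_neg hKc, collapse_of_not_subset hKS hKc, inner_zero_right]

theorem norm_sq_collapse_singleton (hx : SDPFeasible r E x)
    (he : ‖e‖ = 1) (i : V) : ‖collapse S e x {i}‖ ^ 2 = 1 := by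
  rw [collapse_singleton]
  split_ifs
  · rw [he, one_pow]
  · exact hx.1 i

theorem norm_sq_collapse_of_mem (hx : SDPFeasible r E x)
    (hSind : ∀ f ∈ E, ¬ f ⊆ S) {f : Finset V} (hf : f ∈ E) : ‖collapse S e x f‖ ^ 2 = 0 := by
  by_cases hfc : f ⊆ Sᶜ
  · rw [collapse, if_neg (hSind f hf), if_pos hfc, hx.2.1 f hf]
  · rw [collapse_of_not_subset (hSind f hf) hfc, norm_zero, zero_pow two_ne_zero]

theorem norm_sq_collapse_le_one (hx : SDPFeasible r E x)
    (he : ‖e‖ = 1) {u : V} (hu : u ∈ K) (hK : K.card ≤ r + 1) : ‖collapse S e x K‖ ^ 2 ≤ 1 := by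
  unfold collapse
  split_ifs
  · rw [he, one_pow]
  · exact hx.norm_sq_le_one hu hK
  · simp

theorem inner_collapse (hx : SDPFeasible r E x)
    (horth : ∀ I : Finset V, I.Nonempty → I ⊆ Sᶜ → I.card ≤ r + 1 → ⟪e, x I⟫ = 0)
    (hI : I.Nonempty) (hJ : J.Nonempty) (hcard : (I ∪ J).card ≤ r + 1) :
    ⟪collapse S e x I, collapse S e x J⟫ = ‖collapse S e x (I ∪ J)‖ ^ 2 := by
  have hIcard := (card_le_card subset_union_left).trans hcard
  have hJcard := (card_le_card subset_union_right).trans hcard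
  by_cases hIS : I ⊆ S <;> by_cases hJS : J ⊆ S
  · rw [collapse_of_subset hIS, collapse_of_subset hJS, collapse_of_subset (union_subset hIS hJS),
      real_inner_self_eq_norm_sq]
  · rw [collapse_of_subset hIS, inner_collapse_eq_zero_of_not_subset horth hJ hJcard hJS,
      collapse_union_of_subset_of_not_subset hI hIS hJS, norm_zero, zero_pow two_ne_zero]
  · rw [real_inner_comm, collapse_of_subset hJS,
      inner_collapse_eq_zero_of_not_subset horth hI hIcard hIS, union_comm,
      collapse_union_of_subset_of_not_subset hJ hJS hIS, norm_zero, zero_pow two_ne_zero]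
  have hU : ¬ I ∪ J ⊆ S := fun h => hIS (subset_union_left.trans h)
  by_cases hc : I ⊆ Sᶜ ∧ J ⊆ Sᶜ
  · rw [collapse_of_subset_compl hI hc.1, collapse_of_subset_compl hJ hc.2,
      collapse_of_subset_compl (hI.mono subset_union_left) (union_subset hc.1 hc.2)]
    exact hx.2.2.1 I J hI hJ hcard
  rw [collapse_of_not_subset hU (by rwa [union_subset_iff]), norm_zero, zero_pow two_ne_zero]
  rcases not_and_or.1 hc with hIc | hJc
  · rw [collapse_of_not_subset hIS hIc, inner_zero_left]
  · rw [collapse_of_not_subset hJS hJc, inner_zero_right]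

theorem inner_singleton_collapse_anti (hx : SDPFeasible r E x)
    (he : ‖e‖ = 1)
    (horth : ∀ I : Finset V, I.Nonempty → I ⊆ Sᶜ → I.card ≤ r + 1 → ⟪e, x I⟫ = 0)
    (u : V) (hI : I.Nonempty) (hIJ : I ⊆ J) (hJ : J.card ≤ r + 1) :
    ⟪collapse S e x {u}, collapse S e x J⟫ ≤ ⟪collapse S e x {u}, collapse S e x I⟫ := by
  have hJne := hI.mono hIJ
  rw [collapse_singleton]
  split_ifs with hu
  · rw [inner_collapse_right he horth hJne hJ,
      inner_collapse_right he horth hI ((card_le_card hIJ).trans hJ)]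
    split_ifs with hJS hIS hIS
    exacts [le_rfl, absurd (hIJ.trans hJS) hIS, zero_le_one, le_rfl]
  · rw [inner_singleton_collapse_of_notMem horth hu hJne,
      inner_singleton_collapse_of_notMem horth hu hI]
    by_cases hJc : J ⊆ Sᶜ
    · rw [if_pos hJc, if_pos (hIJ.trans hJc)]
      exact hx.2.2.2.1 u I J hI hIJ hJ
    rw [if_neg hJc]
    split_ifs with hIc
    · have hIJ' : I ⊂ J := ssubset_of_subset_of_ne hIJ fun h => hJc (h ▸ hIc)
      exact hx.inner_singleton_nonneg u hI (Nat.lt_succ_iff.1 ((card_lt_card hIJ').trans_le hJ))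
    · exact le_rfl

theorem collapse_triangle (hx : SDPFeasible r E x) (he : ‖e‖ = 1)
    (u : V) (v : Fin r → V) (hv : Function.Injective v) (hvu : ∀ i, v i ≠ u) :
    1 - ‖collapse S e x (insert u (image v univ))‖ ^ 2 ≤
      ∑ i : Fin r, (1 - ‖collapse S e x {u, v i}‖ ^ 2) := by
  set T := insert u (image v univ)
  have hcardT : T.card ≤ r + 1 :=
    (card_insert_le _ _).trans (by simpa using card_image_le (s := univ) (f := v))
  have hpair (i : Fin r) : {u, v i} ⊆ T :=
    insert_subset_insert _ (singleton_subset_iff.2 (mem_image_of_mem v (mem_univ i)))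
  have hterm (i : Fin r) : 0 ≤ 1 - ‖collapse S e x {u, v i}‖ ^ 2 :=
    sub_nonneg.2 (norm_sq_collapse_le_one hx he (mem_insert_self _ _)
      ((card_le_card (hpair i)).trans hcardT))
  by_cases hTS : T ⊆ S
  · rw [collapse_of_subset hTS, he, one_pow, sub_self]
    exact sum_nonneg fun i _ => hterm i
  by_cases hTc : T ⊆ Sᶜ
  · rw [collapse_of_subset_compl (insert_nonempty _ _) hTc]
    refine (hx.2.2.2.2 u v hv hvu).trans_eq (sum_congr rfl fun i _ => ?_)
    rw [collapse_of_subset_compl (insert_nonempty _ _) ((hpair i).trans hTc)]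
  obtain ⟨a, ha, haS, haSc⟩ := exists_mem_pair_not_subset_of_insert hTS hTc
  obtain ⟨j, -, rfl⟩ := mem_image.1 ha
  calc 1 - ‖collapse S e x T‖ ^ 2 = 1 - ‖collapse S e x {u, v j}‖ ^ 2 := by
        rw [collapse_of_not_subset hTS hTc, collapse_of_not_subset haS haSc]
    _ ≤ ∑ i : Fin r, (1 - ‖collapse S e x {u, v i}‖ ^ 2) :=
        single_le_sum (fun i _ => hterm i) (mem_univ j)

end Collapse

theorem stmt_15_general {V : Type} [Fintype V] [DecidableEq V]
    {H : Type} [NormedAddCommGroup H] [InnerProductSpace ℝ H]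
    (r : ℕ)
    (E : Finset (Finset V))
    (S : Finset V) (hSind : ∀ e ∈ E, ¬ e ⊆ S)
    (x : Finset V → H) (hx : SDPFeasible r E x)
    (ehat : H) (hehat : ‖ehat‖ = 1)
    (horth : ∀ I : Finset V, I.Nonempty → I ⊆ Sᶜ → I.card ≤ r + 1 →
      ⟪ehat, x I⟫ = 0) :
    SDPFeasible r E
      (fun I => if I ⊆ S then ehat else if I ⊆ Sᶜ then x I else 0) :=
  ⟨norm_sq_collapse_singleton hx hehat, fun _ hf => norm_sq_collapse_of_mem hx hSind hf,
    fun _ _ hI hJ => inner_collapse hx horth hI hJ,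
    fun u _ _ => inner_singleton_collapse_anti hx hehat horth u,
    fun u v => collapse_triangle hx hehat u v⟩

theorem stmt_15 {V : Type} [Fintype V] [DecidableEq V]
    {H : Type} [NormedAddCommGroup H] [InnerProductSpace ℝ H]
    (r : ℕ) (hr : 2 ≤ r)
    (E : Finset (Finset V)) (hE : ∀ e ∈ E, e.card = r)
    (S : Finset V) (hSind : ∀ e ∈ E, ¬ e ⊆ S)
    (x : Finset V → H) (hx : SDPFeasible r E x)
    (ehat : H) (hehat : ‖ehat‖ = 1)
    (horth : ∀ I : Finset V, I.Nonempty → I ⊆ Sᶜ → I.card ≤ r + 1 →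
      ⟪ehat, x I⟫ = 0) :
    SDPFeasible r E
      (fun I => if I ⊆ S then ehat else if I ⊆ Sᶜ then x I else 0) :=
  stmt_15_general r E S hSind x hx ehat hehat horth
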